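/- arXiv:1712.02648 — 2 statements merged into one kernel-verified Lean document; each statement's English description precedes it below -/
import Mathlib

section
/- Suppose 1 ≤ R < m, Σ_{k≥1} μ_k R^{−k} < ∞, and moreover μ̂(z) ≠ 1 for every complex z with |z| < 1/R and z ≠ 1/m. Then the spectral radius of T on ℓ²_R is at most R, and consequently for every R₁ > R there exists a constant C = C(R₁) such that the operator norm satisfies ‖Tⁿ‖_{ℓ²_R→ℓ²_R} ≤ C·R₁ⁿ for all n ≥ 0. -/
open scoped BigOperators ENNReal

noncomputable section

abbrev H2 : Type := lp (fun _ : ℕ => ℂ) 2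

/-- the vector `v = (m^{-k} 1[k ≥ 1])_k` -/
def vSeq (m : ℝ) : ℕ → ℂ := fun k => if k = 0 then 0 else ((m : ℂ))⁻¹ ^ k

/-- the shift `S` -/
def shiftSeq (a : ℕ → ℂ) : ℕ → ℂ := fun k => if k = 0 then 0 else a (k - 1)

/-- the terms of the series defining `χ(a)` -/
def chiSum (μ : ℕ → ℝ) (a : ℕ → ℂ) : ℕ → ℂ := fun k => (μ (k+1) : ℂ) * (a (k+1) - a k)

/-- the linear functional `χ` -/
def chiSeq (μ : ℕ → ℝ) (a : ℕ → ℂ) : ℂ := ∑' k, chiSum μ a k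

/-- the operator `T = S + χ(·) v` -/
def Tseq (μ : ℕ → ℝ) (m : ℝ) (a : ℕ → ℂ) : ℕ → ℂ :=
  fun k => shiftSeq a k + chiSeq μ a * vSeq m k

/-- membership in `ℓ²_R` -/
def memEllR (R : ℝ) (a : ℕ → ℂ) : Prop :=
  Summable fun k => R ^ (2 * k) * ‖a k‖ ^ 2

/-- from the standard `ℓ²` model to an `ℓ²_R` sequence -/
def fromModel (R : ℝ) (b : ℕ → ℂ) : ℕ → ℂ := fun k => ((R : ℂ))⁻¹ ^ k * b k

/-- from an `ℓ²_R` sequence to its standard `ℓ²` model -/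
def toModel (R : ℝ) (a : ℕ → ℂ) : ℕ → ℂ := fun k => (R : ℂ) ^ k * a k

/-- the generating function `μ̂(z) = Σ_{k≥1} μ_k z^k` -/
def genFun (μ : ℕ → ℝ) (z : ℂ) : ℂ := ∑' k, (μ (k+1) : ℂ) * z ^ (k+1)

/-- `T'` is the bounded operator on the standard `ℓ²` model corresponding to `T` on `ℓ²_R`
under the isometric isomorphism `(a_k)_k ↦ (R^k a_k)_k`. -/
def Intertwines (μ : ℕ → ℝ) (m R : ℝ) (T' : H2 →L[ℂ] H2) : Prop :=
  ∀ b : H2, ∀ k, (T' b : ℕ → ℂ) k = toModel R (Tseq μ m (fromModel R (b : ℕ → ℂ))) k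

/-!
Conjugating by `a ↦ (R^k a_k)_k` turns `T` into `T' = R S + χ ⊗ u` on `ℓ²`, where `‖S‖ ≤ 1` and
`u = ((R/m)^k)_{k ≥ 1}`. For `|λ| > R` the operator `M = λ - R S` is invertible (Neumann series),
so `λ - T' = M (1 - χ ⊗ M⁻¹u)` is invertible as soon as `χ(M⁻¹u) ≠ 1`. The vector `M⁻¹u`
corresponds to the solution `a` of `(λ - S) a = v`, explicit in `z = 1/λ`, and a direct computation
gives `(1 - m z)(1 - χ(a)) = (1 - z)(1 - μ̂(z))`, nonzero by hypothesis when `z ≠ 1/m`; at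
`z = 1/m` instead `1 - χ(a) = (1 - 1/m) Σ_k k μ_k m^{-k}`, and this sum is at least `μ̂(1/m) = 1`.
So the spectrum lies in the closed disc of radius `R`, and Gelfand's formula gives the bound on
`‖Tⁿ‖`.
-/

theorem isUnit_one_sub_of_mul_self_eq_smul {𝕜 A : Type*} [Field 𝕜] [Ring A] [Algebra 𝕜 A]
    {K : A} {t : 𝕜} (hK : K * K = t • K) (ht : t ≠ 1) : IsUnit (1 - K) := by
  have ht' : 1 - t ≠ 0 := sub_ne_zero.2 ht.symm
  refine ⟨⟨1 - K, 1 + (1 - t)⁻¹ • K, ?_, ?_⟩, rfl⟩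
  · simp only [sub_mul, mul_add, one_mul, mul_one, mul_smul_comm, hK]
    match_scalars
    · ring
    · field_simp
      ring
  · simp only [add_mul, mul_sub, one_mul, mul_one, smul_mul_assoc, hK]
    match_scalars
    · ring
    · field_simp
      ring

theorem ContinuousLinearMap.smulRight_mul_smulRight {𝕜 E : Type*} [NormedField 𝕜]
    [NormedAddCommGroup E] [NormedSpace 𝕜 E] (φ : E →L[𝕜] 𝕜) (x : E) :
    φ.smulRight x * φ.smulRight x = φ x • φ.smulRight x := by
  ext b
  simp [smul_smul, mul_comm]

theorem spectralRadius_le_ofReal {𝕜 A : Type*} [NormedField 𝕜] [Ring A] [Algebra 𝕜 A] {a : A}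
    {r : ℝ} (h : ∀ k ∈ spectrum 𝕜 a, ‖k‖ ≤ r) : spectralRadius 𝕜 a ≤ ENNReal.ofReal r :=
  iSup₂_le fun k hk => by
    rw [← enorm_eq_nnnorm, ← ofReal_norm]
    exact ENNReal.ofReal_le_ofReal (h k hk)

theorem exists_norm_pow_le_mul_pow_of_spectralRadius_lt {A : Type*} [NormedRing A]
    [NormedAlgebra ℂ A] [CompleteSpace A] {a : A} {r : ℝ}
    (h : spectralRadius ℂ a < ENNReal.ofReal r) : ∃ C, ∀ n : ℕ, ‖a ^ n‖ ≤ C * r ^ n := by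
  have hr : 0 < r := ENNReal.ofReal_pos.1 (pos_of_gt h)
  have hev : ∀ᶠ n : ℕ in Filter.atTop, ‖a ^ n‖ ≤ r ^ n := by
    filter_upwards [(spectrum.pow_norm_pow_one_div_tendsto_nhds_spectralRadius a).eventually_lt_const
      h, Filter.eventually_ge_atTop 1] with n hn hn1
    rw [ENNReal.ofReal_lt_ofReal_iff hr, one_div, Real.rpow_inv_lt_iff_of_pos (norm_nonneg _) hr.le
      (by exact_mod_cast hn1)] at hn
    exact_mod_cast hn.le
  have hO : (fun n => ‖a ^ n‖) =O[Filter.atTop] (fun n => r ^ n) :=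
    Asymptotics.IsBigO.of_bound' (hev.mono fun n hn => by simpa [abs_of_pos hr] using hn)
  obtain ⟨C, hC⟩ :=
    (Asymptotics.isBigO_nat_atTop_iff fun n hn => absurd hn (pow_pos hr n).ne').1 hO
  exact ⟨C, fun n => by simpa [abs_of_pos hr] using hC n⟩

section Shift

variable {f : ℕ → ℂ} {p : ℝ}

lemma summable_norm_shiftSeq_rpow (h : Summable fun k => ‖f k‖ ^ p) :
    Summable fun k => ‖shiftSeq f k‖ ^ p :=
  (summable_nat_add_iff 1).1 (by simpa [shiftSeq] using h)

lemma tsum_norm_shiftSeq_rpow (h : Summable fun k => ‖f k‖ ^ p) (hp : 0 < p) :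
    ∑' k, ‖shiftSeq f k‖ ^ p = ∑' k, ‖f k‖ ^ p := by
  rw [tsum_eq_zero_add' (by simpa [shiftSeq] using h)]
  simp [shiftSeq, hp.ne']

end Shift

lemma memℓp_shiftSeq (b : H2) : Memℓp (shiftSeq b) 2 := by
  have hb := lp.memℓp b
  rw [memℓp_gen_iff (by norm_num)] at hb ⊢
  exact summable_norm_shiftSeq_rpow hb

def shiftL : H2 →L[ℂ] H2 :=
  LinearMap.mkContinuous
    { toFun := fun b => ⟨shiftSeq b, memℓp_shiftSeq b⟩
      map_add' := fun a b => lp.ext <| funext fun k => by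
        simp only [lp.coeFn_add, Pi.add_apply]
        cases k <;> simp [shiftSeq]
      map_smul' := fun c a => lp.ext <| funext fun k => by
        simp only [lp.coeFn_smul, Pi.smul_apply]
        cases k <;> simp [shiftSeq] }
    1 fun b => by
      rw [one_mul]
      refine lp.norm_le_of_tsum_le (by norm_num) (norm_nonneg b) ?_
      rw [lp.norm_rpow_eq_tsum (by norm_num)]
      exact (tsum_norm_shiftSeq_rpow ((memℓp_gen_iff (by norm_num)).1 (lp.memℓp b)) (by norm_num)).le

lemma norm_shiftL_le : ‖shiftL‖ ≤ 1 :=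
  LinearMap.mkContinuous_norm_le _ zero_le_one _

section Decomposition

variable {μ : ℕ → ℝ} {m R : ℝ}

lemma toModel_Tseq_fromModel (hR : R ≠ 0) (b : ℕ → ℂ) (k : ℕ) :
    toModel R (Tseq μ m (fromModel R b)) k
      = R * shiftSeq b k + chiSeq μ (fromModel R b) * toModel R (vSeq m) k := by
  have hR' : (R : ℂ) ≠ 0 := Complex.ofReal_ne_zero.2 hR
  cases k with
  | zero => simp [toModel, Tseq, shiftSeq, vSeq]
  | succ k =>
    simp only [toModel, Tseq, shiftSeq, fromModel, vSeq, Nat.succ_ne_zero, if_false,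
      Nat.add_sub_cancel, pow_succ, inv_pow]
    field_simp

lemma memℓp_toModel_vSeq (hR : 0 ≤ R) (hRm : R < m) : Memℓp (toModel R (vSeq m)) 2 := by
  have hm : 0 < m := hR.trans_lt hRm
  have hgeom : Memℓp (fun k : ℕ => (R / m) ^ k) 1 :=
    memℓp_gen (by simpa [abs_of_nonneg (div_nonneg hR hm.le)] using
      summable_geometric_of_lt_one (div_nonneg hR hm.le) ((div_lt_one hm).2 hRm))
  refine (hgeom.of_exponent_ge (by norm_num)).mono fun k => ?_
  cases k with
  | zero => simp [toModel, vSeq]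
  | succ k => simp [toModel, vSeq, abs_of_nonneg hR, abs_of_pos hm, div_eq_mul_inv, mul_pow]

/-- `χ` is bounded on `ℓ²_R` because `T` and `S` are: coordinate 1 of `T a = S a + χ(a) v`
reads `(T a)_1 = a_0 + χ(a) / m`. -/
def chiCLM (m R : ℝ) (T' : H2 →L[ℂ] H2) : H2 →L[ℂ] ℂ :=
  ((m : ℂ) / R) • (lp.evalCLM ℂ _ 2 1 ∘L T' - (R : ℂ) • lp.evalCLM ℂ _ 2 0)

variable {T' : H2 →L[ℂ] H2}

lemma chiCLM_apply (hm : m ≠ 0) (hR : R ≠ 0) (hT' : Intertwines μ m R T') (b : H2) :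
    chiCLM m R T' b = chiSeq μ (fromModel R b) := by
  have h1 := (hT' b 1).trans (toModel_Tseq_fromModel hR b 1)
  simp only [shiftSeq, toModel, vSeq, one_ne_zero, if_false, pow_one, Nat.sub_self] at h1
  have hR' : (R : ℂ) ≠ 0 := Complex.ofReal_ne_zero.2 hR
  have hm' : (m : ℂ) ≠ 0 := Complex.ofReal_ne_zero.2 hm
  change (m : ℂ) / R * ((T' b : ℕ → ℂ) 1 - R * (b : ℕ → ℂ) 0) = _
  rw [h1]
  field_simp
  ring

lemma eq_smul_shiftL_add_smulRight (hm : m ≠ 0) (hR : R ≠ 0) (hT' : Intertwines μ m R T')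
    (hu : Memℓp (toModel R (vSeq m)) 2) :
    T' = (R : ℂ) • shiftL + (chiCLM m R T').smulRight (⟨_, hu⟩ : H2) := by
  ext b k
  rw [hT' b k, toModel_Tseq_fromModel hR, ← chiCLM_apply hm hR hT']
  rfl

end Decomposition

/-- For `z = λ⁻¹`, the solution of `(λ - S) a = v`. -/
def aseq (m : ℝ) (z : ℂ) : ℕ → ℂ
  | 0 => 0
  | k + 1 => z * aseq m z k + z * (m : ℂ)⁻¹ ^ (k + 1)

section Aseq

variable {m R : ℝ}

lemma fromModel_eq_aseq {x : ℕ → ℂ} {lam : ℂ} (hlam : lam ≠ 0) (hR : R ≠ 0)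
    (hx : ∀ k, lam * x k - R * shiftSeq x k = toModel R (vSeq m) k) :
    fromModel R x = aseq m lam⁻¹ := by
  have hR' : (R : ℂ) ≠ 0 := Complex.ofReal_ne_zero.2 hR
  funext k
  induction k with
  | zero => simpa [fromModel, aseq, shiftSeq, toModel, vSeq, hlam] using hx 0
  | succ k ih =>
    have hk := hx (k + 1)
    simp only [shiftSeq, toModel, vSeq, Nat.succ_ne_zero, if_false, Nat.add_sub_cancel] at hk
    rw [aseq, ← ih]
    generalize (m : ℂ)⁻¹ ^ (k + 1) = w at hk ⊢
    simp only [fromModel, inv_pow]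
    field_simp
    linear_combination (R : ℂ) ^ k * hk

lemma aseq_eq (hm : (m : ℂ) ≠ 0) {z : ℂ} (hmz : 1 - m * z ≠ 0) (k : ℕ) :
    aseq m z k = z * ((m : ℂ)⁻¹ ^ k - z ^ k) / (1 - m * z) := by
  induction k with
  | zero => simp [aseq]
  | succ k ih =>
    rw [aseq, ih, ← mul_div_assoc, div_add' _ _ _ hmz, div_eq_div_iff hmz hmz]
    linear_combination (-((1 - (m : ℂ) * z) * z ^ 2 * (m : ℂ)⁻¹ ^ k)) * mul_inv_cancel₀ hm

lemma aseq_inv (k : ℕ) : aseq m (m : ℂ)⁻¹ k = k * (m : ℂ)⁻¹ ^ (k + 1) := by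
  induction k with
  | zero => simp [aseq]
  | succ k ih =>
    rw [aseq, ih]
    push_cast
    ring

end Aseq

section Chi

variable {μ : ℕ → ℝ} {m : ℝ}

lemma one_sub_chiSeq_aseq (hm : (m : ℂ) ≠ 0) {z : ℂ} (hmz : 1 - m * z ≠ 0)
    (hμm : HasSum (fun k => (μ (k + 1) : ℂ) * (m : ℂ)⁻¹ ^ (k + 1)) 1)
    (hz : Summable fun k => (μ (k + 1) : ℂ) * z ^ (k + 1)) :
    (1 - m * z) * (1 - chiSeq μ (aseq m z)) = (1 - z) * (1 - genFun μ z) := by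
  have hterm : ∀ k, (1 - m * z) * chiSum μ (aseq m z) k
      = z * (1 - m) * ((μ (k + 1) : ℂ) * (m : ℂ)⁻¹ ^ (k + 1))
        + (1 - z) * ((μ (k + 1) : ℂ) * z ^ (k + 1)) := by
    intro k
    rw [chiSum, aseq_eq hm hmz, aseq_eq hm hmz]
    field_simp
    linear_combination (z * μ (k + 1) * (m : ℂ)⁻¹ ^ k) * mul_inv_cancel₀ hm
  have hchi : (1 - m * z) * chiSeq μ (aseq m z) = z * (1 - m) + (1 - z) * genFun μ z := by
    rw [chiSeq, ← tsum_mul_left, tsum_congr hterm]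
    simpa [genFun] using ((hμm.mul_left (z * (1 - m))).add (hz.hasSum.mul_left (1 - z))).tsum_eq
  linear_combination -hchi

lemma one_sub_chiSeq_aseq_inv {D : ℂ}
    (hμm : HasSum (fun k => (μ (k + 1) : ℂ) * (m : ℂ)⁻¹ ^ (k + 1)) 1)
    (hD : HasSum (fun k : ℕ => ((k : ℂ) + 1) * μ (k + 1) * (m : ℂ)⁻¹ ^ (k + 1)) D) :
    1 - chiSeq μ (aseq m (m : ℂ)⁻¹) = (1 - (m : ℂ)⁻¹) * D := by
  have hterm : ∀ k, chiSum μ (aseq m (m : ℂ)⁻¹) k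
      = ((m : ℂ)⁻¹ - 1) * (((k : ℂ) + 1) * μ (k + 1) * (m : ℂ)⁻¹ ^ (k + 1))
        + (μ (k + 1) : ℂ) * (m : ℂ)⁻¹ ^ (k + 1) := by
    intro k
    rw [chiSum, aseq_inv, aseq_inv]
    push_cast
    ring
  rw [chiSeq, tsum_congr hterm, ((hD.mul_left _).add hμm).tsum_eq]
  ring

end Chi

section Series

variable {μ : ℕ → ℝ} (hμ : ∀ k, 0 ≤ μ k)
include hμ

lemma summable_genFun {r : ℝ} (hμr : Summable fun k => μ (k + 1) * r ^ (k + 1)) {z : ℂ}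
    (hz : ‖z‖ ≤ r) : Summable fun k => (μ (k + 1) : ℂ) * z ^ (k + 1) :=
  Summable.of_norm_bounded hμr fun k => by
    rw [norm_mul, norm_pow, Complex.norm_real, Real.norm_of_nonneg (hμ _)]
    have := hμ (k + 1)
    gcongr

lemma summable_succ_mul_inv_pow {m R : ℝ} (hR : 0 < R) (hRm : R < m)
    (hμR : Summable fun k => μ (k + 1) * R⁻¹ ^ (k + 1)) :
    Summable fun k : ℕ => ((k : ℝ) + 1) * μ (k + 1) * m⁻¹ ^ (k + 1) := by
  have hm : 0 < m := hR.trans hRm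
  have hq : ‖R / m‖ < 1 := by
    rw [Real.norm_of_nonneg (by positivity), div_lt_one hm]
    exact hRm
  have hs : Summable fun k : ℕ => ((k : ℝ) + 1) * (R / m) ^ (k + 1) := by
    refine ((summable_nat_add_iff (f := fun n : ℕ => (n : ℝ) ^ 1 * (R / m) ^ n) 1).2
      (summable_pow_mul_geometric_of_norm_lt_one 1 hq)).congr fun k => ?_
    push_cast
    ring
  refine Summable.of_nonneg_of_le (fun k => by have := hμ (k + 1); positivity) (fun k => ?_)
    (hμR.mul_left (∑' k : ℕ, ((k : ℝ) + 1) * (R / m) ^ (k + 1)))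
  have hle := hs.le_tsum k fun j _ => by positivity
  calc ((k : ℝ) + 1) * μ (k + 1) * m⁻¹ ^ (k + 1)
      = ((k : ℝ) + 1) * (R / m) ^ (k + 1) * (μ (k + 1) * R⁻¹ ^ (k + 1)) := by
        have hR1 : R ^ (k + 1) * R⁻¹ ^ (k + 1) = 1 := by
          rw [← mul_pow, mul_inv_cancel₀ hR.ne', one_pow]
        rw [div_eq_mul_inv, mul_pow]
        linear_combination (-((k : ℝ) + 1) * μ (k + 1) * m⁻¹ ^ (k + 1)) * hR1
    _ ≤ _ := mul_le_mul_of_nonneg_right hle (by have := hμ (k + 1); positivity)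

lemma one_le_of_hasSum_succ_mul {m D : ℝ} (hm : 0 < m)
    (hμm : HasSum (fun k => μ (k + 1) * m⁻¹ ^ (k + 1)) 1)
    (hD : HasSum (fun k : ℕ => ((k : ℝ) + 1) * μ (k + 1) * m⁻¹ ^ (k + 1)) D) : 1 ≤ D :=
  hasSum_le (fun k => by
      have : 0 ≤ μ (k + 1) * m⁻¹ ^ (k + 1) := by have := hμ (k + 1); positivity
      nlinarith [(k.cast_nonneg : (0 : ℝ) ≤ k)])
    hμm hD

end Series

section Resolvent

variable {μ : ℕ → ℝ} {m R : ℝ} (hm : 1 < m) (hμnn : ∀ k, 0 ≤ μ k)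
  (hμm : HasSum (fun k : ℕ => μ (k + 1) * (m⁻¹) ^ (k + 1)) 1)
  (hR1 : 1 ≤ R) (hRm : R < m)
  (hμR : Summable fun k : ℕ => μ (k + 1) * (R⁻¹) ^ (k + 1))
  (hroot : ∀ z : ℂ, ‖z‖ < R⁻¹ → z ≠ ((m : ℂ))⁻¹ → genFun μ z ≠ 1)
include hm hμnn hμm hR1 hRm hμR hroot

lemma chiSeq_aseq_ne_one {z : ℂ} (hz : ‖z‖ < R⁻¹) : chiSeq μ (aseq m z) ≠ 1 := by
  have hm0 : (m : ℂ) ≠ 0 := Complex.ofReal_ne_zero.2 (by linarith)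
  have hμmC : HasSum (fun k => (μ (k + 1) : ℂ) * (m : ℂ)⁻¹ ^ (k + 1)) 1 := by
    have := Complex.hasSum_ofReal.2 hμm
    push_cast at this
    exact this
  refine fun h => (?_ : 1 - chiSeq μ (aseq m z) ≠ 0) (sub_eq_zero.2 h.symm)
  by_cases hcrit : z = (m : ℂ)⁻¹
  · subst hcrit
    obtain ⟨D, hD⟩ := summable_succ_mul_inv_pow hμnn (by linarith) hRm hμR
    have hDC : HasSum (fun k : ℕ => ((k : ℂ) + 1) * μ (k + 1) * (m : ℂ)⁻¹ ^ (k + 1)) D := by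
      have := Complex.hasSum_ofReal.2 hD
      push_cast at this
      exact this
    rw [one_sub_chiSeq_aseq_inv hμmC hDC]
    have hD1 := one_le_of_hasSum_succ_mul hμnn (by linarith) hμm hD
    refine mul_ne_zero (sub_ne_zero.2 fun h => ?_) (Complex.ofReal_ne_zero.2 (by linarith))
    rw [eq_comm, inv_eq_one, Complex.ofReal_eq_one] at h
    linarith
  · have hmz : 1 - m * z ≠ 0 := fun h => hcrit (eq_inv_of_mul_eq_one_right (sub_eq_zero.1 h).symm)
    have hz1 : 1 - z ≠ 0 := fun h => by
      rw [← sub_eq_zero.1 h, norm_one] at hz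
      exact (inv_le_one_of_one_le₀ hR1).not_gt hz
    have hg := summable_genFun hμnn hμR hz.le
    have key := one_sub_chiSeq_aseq hm0 hmz hμmC hg
    exact (mul_ne_zero_iff.1 (key ▸ mul_ne_zero hz1
      (sub_ne_zero.2 (hroot z hz hcrit).symm))).2

lemma isUnit_smul_one_sub_of_lt_norm {T' : H2 →L[ℂ] H2} (hT' : Intertwines μ m R T') {lam : ℂ}
    (hlam : R < ‖lam‖) :
    IsUnit (lam • (1 : H2 →L[ℂ] H2) - T') := by
  have hR0 : 0 < R := by linarith
  have hlam0 : lam ≠ 0 := norm_pos_iff.1 (hR0.trans hlam)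
  have hu := memℓp_toModel_vSeq hR0.le hRm
  set u : H2 := ⟨_, hu⟩
  set φ := chiCLM m R T'
  set M := lam • (1 : H2 →L[ℂ] H2) - (R : ℂ) • shiftL
  have hM : IsUnit M := by
    have hnorm : ‖(R : ℂ) • shiftL‖ * ‖(1 : H2 →L[ℂ] H2)‖ < ‖lam‖ := by
      calc ‖(R : ℂ) • shiftL‖ * ‖(1 : H2 →L[ℂ] H2)‖ ≤ R * 1 := by
            rw [norm_smul, Complex.norm_real, Real.norm_of_nonneg hR0.le]
            exact mul_le_mul (mul_le_of_le_one_right hR0.le norm_shiftL_le)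
              ContinuousLinearMap.norm_id_le (norm_nonneg _) hR0.le
        _ < ‖lam‖ := by rwa [mul_one]
    have := spectrum.mem_resolventSet_iff.1 (spectrum.mem_resolventSet_of_norm_lt_mul hnorm)
    rwa [Algebra.algebraMap_eq_smul_one] at this
  obtain ⟨x, hx⟩ : ∃ x, M x = u :=
    ⟨_, congrArg (fun f : H2 →L[ℂ] H2 => f u) hM.mul_val_inv⟩
  have hxa : fromModel R x = aseq m lam⁻¹ :=
    fromModel_eq_aseq hlam0 hR0.ne' fun k => congrArg (fun y : H2 => (y : ℕ → ℂ) k) hx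
  have hφx : φ x ≠ 1 := by
    rw [chiCLM_apply (by linarith) hR0.ne' hT', hxa]
    exact chiSeq_aseq_ne_one hm hμnn hμm hR1 hRm hμR hroot
      (by rw [norm_inv]; exact inv_strictAnti₀ hR0 hlam)
  have hMK : M * φ.smulRight x = φ.smulRight u := ContinuousLinearMap.ext fun b => by
    change M (φ b • x) = φ b • u
    rw [map_smul, hx]
  have hdecomp : lam • (1 : H2 →L[ℂ] H2) - T' = M * (1 - φ.smulRight x) := by
    rw [mul_sub, mul_one, hMK, eq_smul_shiftL_add_smulRight (by linarith) hR0.ne' hT' hu,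
      sub_add_eq_sub_sub]
  rw [hdecomp]
  exact hM.mul (isUnit_one_sub_of_mul_self_eq_smul (φ.smulRight_mul_smulRight x) hφx)

end Resolvent

/-- If moreover `μ̂(z) ≠ 1` for every `z ≠ 1/m` with `|z| < 1/R`, then the
spectral radius of `T` on `ℓ²_R` is at most `R`, and for every `R₁ > R` there is a constant
`C` with `‖Tⁿ‖ ≤ C R₁ⁿ` for all `n ≥ 0`. -/
theorem statement4
    (μ : ℕ → ℝ) (m R : ℝ)
    (hm : 1 < m) (hμnn : ∀ k, 0 ≤ μ k)
    (hμm : HasSum (fun k : ℕ => μ (k + 1) * (m⁻¹) ^ (k + 1)) 1)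
    (hR1 : 1 ≤ R) (hRm : R < m)
    (hμR : Summable fun k : ℕ => μ (k + 1) * (R⁻¹) ^ (k + 1))
    (hroot : ∀ z : ℂ, ‖z‖ < R⁻¹ → z ≠ ((m : ℂ))⁻¹ → genFun μ z ≠ 1)
    (T' : H2 →L[ℂ] H2) (hT' : Intertwines μ m R T') :
    spectralRadius ℂ T' ≤ ENNReal.ofReal R ∧
    ∀ R₁ : ℝ, R < R₁ → ∃ C : ℝ, ∀ n : ℕ, ‖T' ^ n‖ ≤ C * R₁ ^ n := by
  have hspec : ∀ lam ∈ spectrum ℂ T', ‖lam‖ ≤ R := fun lam hlam => not_lt.1 fun hgt =>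
    spectrum.mem_iff.1 hlam <| by
      simpa [Algebra.algebraMap_eq_smul_one] using
        isUnit_smul_one_sub_of_lt_norm hm hμnn hμm hR1 hRm hμR hroot hT' hgt
  have hrad := spectralRadius_le_ofReal hspec
  exact ⟨hrad, fun R₁ hR₁ => exists_norm_pow_le_mul_pow_of_spectralRadius_lt
    (hrad.trans_lt ((ENNReal.ofReal_lt_ofReal_iff (by linarith)).2 hR₁))⟩
end
end

section
/- Suppose 1 ≤ R < m and Σ_{k≥1} μ_k R^{−k} < ∞. Let λ be complex with |λ| > R, λ ≠ m, and μ̂(1/λ) = 1. For h = (h_j)_{j≥0} ∈ ℓ²_R define h̃(λ) := ( Σ_{j=0}^{k} λ^{j−k−1}·h_j )_{k≥0} (the coefficient sequence of the power series h(z)/(λ−z)). Then h̃(λ) ∈ ℓ²_R, the map h ↦ χ(h̃(λ)) is a bounded linear functional on ℓ²_R, and the range of λ·Id − T on ℓ²_R equals { h ∈ ℓ²_R : χ(h̃(λ)) = 0 }. -/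
open scoped BigOperators ENNReal

noncomputable section

/-! `h̃(λ)` is the unique solution `a` of `λ a - S a = h`, i.e. `(λ - S)⁻¹ h`. It is the
convolution of `h` with the geometric sequence `(λ^{-k-1})_k`; as `|λ| > R`, Cauchy–Schwarz
against the geometric weights shows that it preserves `ℓ²_R`, and its coefficients are
`O(‖h‖ R^{-k})`, so `χ(h̃(λ))` converges absolutely and depends boundedly on `h`.

If `h = λ a - T a = (λ - S) a - χ(a) v`, then `h̃(λ) = a - χ(a) ṽ(λ)` where
`ṽ(λ)_k = (m^{-k} - λ^{-k}) / (λ - m)`, and `χ(ṽ(λ)) = 1` because `μ̂(1/m) = μ̂(1/λ) = 1`;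
hence `χ(h̃(λ)) = 0`. Conversely, if `χ(h̃(λ)) = 0` then `T h̃(λ) = S h̃(λ)`, so
`(λ - T) h̃(λ) = h`. -/

open Finset

section Resolvent

variable {K : Type*} [Field K] (lam : K)

/-- `h̃(λ)`: the coefficients of `h(z) / (λ - z)`. -/
def resolventSeq : (ℕ → K) →ₗ[K] (ℕ → K) where
  toFun h k := ∑ j ∈ range (k + 1), lam⁻¹ ^ (k + 1 - j) * h j
  map_add' h g := by ext k; simp [mul_add, sum_add_distrib]
  map_smul' c h := by ext k; simp [mul_sum, mul_left_comm]

lemma resolventSeq_apply (h : ℕ → K) (k : ℕ) :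
    resolventSeq lam h k = ∑ j ∈ range (k + 1), lam⁻¹ ^ (k + 1 - j) * h j := rfl

lemma resolventSeq_zero (h : ℕ → K) : resolventSeq lam h 0 = lam⁻¹ * h 0 := by
  simp [resolventSeq_apply]

lemma resolventSeq_succ (h : ℕ → K) (k : ℕ) :
    resolventSeq lam h (k + 1) = lam⁻¹ * (resolventSeq lam h k + h (k + 1)) := by
  rw [resolventSeq_apply, sum_range_succ, Nat.add_sub_cancel_left, pow_one, mul_add,
    resolventSeq_apply, mul_sum]
  congr 1
  refine sum_congr rfl fun j hj => ?_
  rw [show k + 1 + 1 - j = k + 1 - j + 1 by have := mem_range.mp hj; omega, pow_succ']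
  ring

end Resolvent

section Shift

variable {lam : ℂ}

lemma mul_resolventSeq_sub_shiftSeq (hlam : lam ≠ 0) (h : ℕ → ℂ) (k : ℕ) :
    lam * resolventSeq lam h k - shiftSeq (resolventSeq lam h) k = h k := by
  cases k with
  | zero => simp [shiftSeq, resolventSeq_zero, hlam]
  | succ k => simp [shiftSeq, resolventSeq_succ, hlam]

lemma resolventSeq_eq_of_mul_sub_shiftSeq (hlam : lam ≠ 0) {a h : ℕ → ℂ}
    (ha : ∀ k, lam * a k - shiftSeq a k = h k) : resolventSeq lam h = a := by
  funext k
  induction k with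
  | zero =>
    rw [resolventSeq_zero, ← ha 0]
    simp [shiftSeq, hlam]
  | succ k ih =>
    rw [resolventSeq_succ, ih, ← ha (k + 1)]
    simp [shiftSeq, hlam]

lemma resolventSeq_vSeq {m : ℝ} (hm : (m : ℂ) ≠ 0) (hlam : lam ≠ 0) (hlamm : lam ≠ m) :
    resolventSeq lam (vSeq m) = fun k => ((m : ℂ)⁻¹ ^ k - lam⁻¹ ^ k) / (lam - m) := by
  refine resolventSeq_eq_of_mul_sub_shiftSeq hlam fun k => ?_
  have hsub : lam - m ≠ 0 := sub_ne_zero.mpr hlamm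
  cases k with
  | zero => simp [shiftSeq, vSeq]
  | succ k =>
    simp only [shiftSeq, vSeq, Nat.add_one_ne_zero, if_false, Nat.add_sub_cancel]
    rw [pow_succ, pow_succ]
    field_simp
    ring

end Shift

section Chi

variable {μ : ℕ → ℝ}

lemma chiSum_sub (a b : ℕ → ℂ) : chiSum μ (a - b) = chiSum μ a - chiSum μ b := by
  funext k; simp only [chiSum, Pi.sub_apply]; ring

lemma chiSum_smul (c : ℂ) (a : ℕ → ℂ) : chiSum μ (c • a) = c • chiSum μ a := by
  funext k; simp only [chiSum, Pi.smul_apply, smul_eq_mul]; ring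

lemma chiSeq_add {a b : ℕ → ℂ} (ha : Summable (chiSum μ a)) (hb : Summable (chiSum μ b)) :
    chiSeq μ (a + b) = chiSeq μ a + chiSeq μ b := by
  rw [chiSeq, chiSeq, chiSeq, ← ha.tsum_add hb]
  congr 1; funext k; simp only [chiSum, Pi.add_apply]; ring

lemma chiSeq_smul (c : ℂ) (a : ℕ → ℂ) : chiSeq μ (c • a) = c * chiSeq μ a := by
  rw [chiSeq, chiSum_smul, chiSeq, ← tsum_mul_left]; rfl

lemma norm_chiSum_le (hμ : ∀ k, 0 ≤ μ k) {R C : ℝ} (hR : 0 < R) {a : ℕ → ℂ}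
    (ha : ∀ k, ‖a k‖ ≤ C * R⁻¹ ^ k) (k : ℕ) :
    ‖chiSum μ a k‖ ≤ C * (1 + R) * (μ (k + 1) * R⁻¹ ^ (k + 1)) := by
  have hdiff : ‖a (k + 1) - a k‖ ≤ C * R⁻¹ ^ (k + 1) + C * R⁻¹ ^ k :=
    (norm_sub_le _ _).trans (add_le_add (ha _) (ha _))
  calc ‖chiSum μ a k‖ = μ (k + 1) * ‖a (k + 1) - a k‖ := by
        rw [chiSum, norm_mul, Complex.norm_real, Real.norm_of_nonneg (hμ _)]
    _ ≤ μ (k + 1) * (C * R⁻¹ ^ (k + 1) + C * R⁻¹ ^ k) := by gcongr; exact hμ _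
    _ = C * (1 + R) * (μ (k + 1) * R⁻¹ ^ (k + 1)) := by
        rw [pow_succ]; field_simp

lemma summable_chiSum_of_norm_le (hμ : ∀ k, 0 ≤ μ k) {R C : ℝ} (hR : 0 < R)
    (hμR : Summable fun k => μ (k + 1) * R⁻¹ ^ (k + 1)) {a : ℕ → ℂ}
    (ha : ∀ k, ‖a k‖ ≤ C * R⁻¹ ^ k) : Summable (chiSum μ a) :=
  .of_norm_bounded (hμR.mul_left _) (norm_chiSum_le hμ hR ha)

lemma norm_chiSeq_le (hμ : ∀ k, 0 ≤ μ k) {R C : ℝ} (hR : 0 < R)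
    (hμR : Summable fun k => μ (k + 1) * R⁻¹ ^ (k + 1)) {a : ℕ → ℂ}
    (ha : ∀ k, ‖a k‖ ≤ C * R⁻¹ ^ k) :
    ‖chiSeq μ a‖ ≤ C * (1 + R) * ∑' k, μ (k + 1) * R⁻¹ ^ (k + 1) :=
  tsum_of_norm_bounded (hμR.hasSum.mul_left _) (norm_chiSum_le hμ hR ha)

lemma summable_mu_mul_pow (hμ : ∀ k, 0 ≤ μ k) {r : ℝ}
    (hμr : Summable fun k => μ (k + 1) * r ^ (k + 1)) {z : ℂ} (hz : ‖z‖ ≤ r) :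
    Summable fun k => (μ (k + 1) : ℂ) * z ^ (k + 1) := by
  refine .of_norm_bounded hμr fun k => ?_
  rw [norm_mul, norm_pow, Complex.norm_real, Real.norm_of_nonneg (hμ _)]
  gcongr
  exact hμ _

lemma hasSum_chiSum_div_sub {a b : ℂ} (ha : a ≠ 0) (hb : b ≠ 0) (hab : a ≠ b)
    (hμa : HasSum (fun k => (μ (k + 1) : ℂ) * a⁻¹ ^ (k + 1)) 1)
    (hμb : HasSum (fun k => (μ (k + 1) : ℂ) * b⁻¹ ^ (k + 1)) 1) :
    HasSum (chiSum μ fun k => (a⁻¹ ^ k - b⁻¹ ^ k) / (b - a)) 1 := by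
  have hsub : b - a ≠ 0 := sub_ne_zero.mpr hab.symm
  have h := ((hμa.mul_left (1 - a)).sub (hμb.mul_left (1 - b))).div_const (b - a)
  rw [show ((1 - a) * 1 - (1 - b) * 1) / (b - a) = 1 by rw [div_eq_one_iff_eq hsub]; ring] at h
  refine h.congr_fun fun k => ?_
  simp only [chiSum]
  rw [pow_succ, pow_succ]
  field_simp
  ring

end Chi

lemma norm_resolventSeq_le {K : Type*} [NormedField K] {lam : K} {R C : ℝ} (hR : 0 < R)
    (hRlam : R < ‖lam‖) {h : ℕ → K} (hC : ∀ j, ‖h j‖ ≤ C * R⁻¹ ^ j) (k : ℕ) :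
    ‖resolventSeq lam h k‖ ≤ C * (‖lam‖ - R)⁻¹ * R⁻¹ ^ k := by
  have hlamR : 0 < ‖lam‖ - R := sub_pos.mpr hRlam
  have hlam : ‖lam‖ ≠ 0 := (hR.trans hRlam).ne'
  have hC0 : ‖h 0‖ ≤ C := by simpa using hC 0
  induction k with
  | zero =>
    rw [resolventSeq_zero, norm_mul, norm_inv, pow_zero, mul_one, mul_comm C]
    gcongr
    linarith
  | succ k ih =>
    rw [resolventSeq_succ, norm_mul, norm_inv]
    calc ‖lam‖⁻¹ * ‖resolventSeq lam h k + h (k + 1)‖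
        ≤ ‖lam‖⁻¹ * (C * (‖lam‖ - R)⁻¹ * R⁻¹ ^ k + C * R⁻¹ ^ (k + 1)) := by
          gcongr; exact (norm_add_le _ _).trans (add_le_add ih (hC _))
      _ = C * (‖lam‖ - R)⁻¹ * R⁻¹ ^ (k + 1) := by
          rw [pow_succ]; field_simp; ring

lemma sum_range_pow_sub_le {q : ℝ} (hq0 : 0 ≤ q) (hq1 : q < 1) (k : ℕ) :
    ∑ j ∈ range (k + 1), q ^ (k - j) ≤ (1 - q)⁻¹ := by
  have := sum_range_reflect (fun j => q ^ j) (k + 1)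
  simp only [Nat.add_sub_cancel] at this
  rw [this, range_eq_Ico, inv_eq_one_div, ← pow_zero q]
  exact geom_sum_Ico_le_of_lt_one hq0 hq1

lemma summable_sq_sum_geometric_mul {q : ℝ} (hq0 : 0 ≤ q) (hq1 : q < 1) {B : ℕ → ℝ}
    (hB : Summable fun k => B k ^ 2) :
    Summable fun k => (∑ j ∈ range (k + 1), q ^ (k - j) * B j) ^ 2 := by
  have hgeom := summable_geometric_of_lt_one hq0 hq1
  have hconv : Summable fun k => ∑ j ∈ range (k + 1), B j ^ 2 * q ^ (k - j) :=
    summable_sum_mul_range_of_summable_norm'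
      (hB.congr fun k => (Real.norm_of_nonneg (sq_nonneg _)).symm) hB
      (hgeom.congr fun k => (Real.norm_of_nonneg (pow_nonneg hq0 _)).symm) hgeom
  refine .of_nonneg_of_le (fun _ => sq_nonneg _) (fun k => ?_) (hconv.mul_left (1 - q)⁻¹)
  calc (∑ j ∈ range (k + 1), q ^ (k - j) * B j) ^ 2
      ≤ (∑ j ∈ range (k + 1), q ^ (k - j)) * ∑ j ∈ range (k + 1), B j ^ 2 * q ^ (k - j) :=
        sum_sq_le_sum_mul_sum_of_sq_le_mul _ (fun _ _ => by positivity)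
          (fun _ _ => by positivity) (fun _ _ => by ring_nf; rfl)
    _ ≤ (1 - q)⁻¹ * ∑ j ∈ range (k + 1), B j ^ 2 * q ^ (k - j) := by
        gcongr
        exact sum_range_pow_sub_le hq0 hq1 k

section Model

variable {R : ℝ}

lemma memEllR_resolventSeq {lam : ℂ} (hR : 0 ≤ R) (hRlam : R < ‖lam‖) {h : ℕ → ℂ}
    (hh : memEllR R h) : memEllR R (resolventSeq lam h) := by
  have hlam : 0 < ‖lam‖ := hR.trans_lt hRlam
  set q := R / ‖lam‖
  set B : ℕ → ℝ := fun j => ‖lam‖⁻¹ * (R ^ j * ‖h j‖)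
  have hB : Summable fun j => B j ^ 2 :=
    (hh.mul_left (‖lam‖⁻¹ ^ 2)).congr fun j => by simp only [B]; ring
  have hpt : ∀ k, R ^ k * ‖resolventSeq lam h k‖ ≤ ∑ j ∈ range (k + 1), q ^ (k - j) * B j := by
    intro k
    calc R ^ k * ‖resolventSeq lam h k‖
        ≤ ∑ j ∈ range (k + 1), R ^ k * ‖lam⁻¹ ^ (k + 1 - j) * h j‖ := by
          rw [resolventSeq_apply, ← mul_sum]; gcongr; exact norm_sum_le _ _
      _ = ∑ j ∈ range (k + 1), q ^ (k - j) * B j := sum_congr rfl fun j hj => by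
          obtain ⟨n, rfl⟩ := Nat.exists_eq_add_of_le (mem_range_succ_iff.mp hj)
          rw [show j + n + 1 - j = n + 1 by omega, Nat.add_sub_cancel_left, norm_mul, norm_pow,
            norm_inv]
          simp only [q, B, div_pow, pow_add, pow_succ, inv_pow]
          field_simp
  refine (summable_sq_sum_geometric_mul (by positivity) ((div_lt_one hlam).mpr hRlam)
    hB).of_nonneg_of_le (fun _ => by positivity) fun k => ?_
  rw [mul_comm 2 k, pow_mul, ← mul_pow]
  exact pow_le_pow_left₀ (by positivity) (hpt k) 2

lemma memEllR_iff_memℓp_toModel {a : ℕ → ℂ} : memEllR R a ↔ Memℓp (toModel R a) 2 := by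
  rw [memℓp_gen_iff (by norm_num), memEllR]
  refine iff_of_eq (congrArg Summable (funext fun k => ?_))
  rw [toModel, norm_mul, norm_pow, Complex.norm_real, Real.norm_eq_abs, ENNReal.toReal_ofNat,
    Real.rpow_two, mul_pow, ← pow_mul, mul_comm k, pow_mul, pow_mul, sq_abs]

lemma toModel_fromModel (hR : R ≠ 0) (b : ℕ → ℂ) : toModel R (fromModel R b) = b := by
  funext k; simp [toModel, fromModel, hR]

lemma fromModel_toModel (hR : R ≠ 0) (a : ℕ → ℂ) : fromModel R (toModel R a) = a := by
  funext k; simp [toModel, fromModel, hR]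

lemma fromModel_injective (hR : R ≠ 0) : Function.Injective (fromModel R) :=
  Function.LeftInverse.injective (g := toModel R) (toModel_fromModel hR)

lemma fromModel_add (a b : ℕ → ℂ) : fromModel R (a + b) = fromModel R a + fromModel R b := by
  funext k; simp only [fromModel, Pi.add_apply]; ring

lemma fromModel_sub (a b : ℕ → ℂ) : fromModel R (a - b) = fromModel R a - fromModel R b := by
  funext k; simp only [fromModel, Pi.sub_apply]; ring

lemma fromModel_smul (c : ℂ) (a : ℕ → ℂ) : fromModel R (c • a) = c • fromModel R a := by
  funext k; simp only [fromModel, Pi.smul_apply, smul_eq_mul]; ring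

lemma norm_fromModel_le (hR : 0 < R) (b : H2) (j : ℕ) : ‖fromModel R b j‖ ≤ ‖b‖ * R⁻¹ ^ j := by
  rw [fromModel, norm_mul, norm_pow, norm_inv, Complex.norm_real, Real.norm_of_nonneg hR.le,
    mul_comm]
  gcongr
  exact lp.norm_apply_le_norm (by norm_num) b j

lemma Intertwines.fromModel_apply {μ : ℕ → ℝ} {m : ℝ} {T' : H2 →L[ℂ] H2}
    (hT : Intertwines μ m R T') (hR : R ≠ 0) (x : H2) :
    fromModel R (T' x) = Tseq μ m (fromModel R x) := by
  funext k
  rw [fromModel, hT x k, toModel]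
  simp [hR]

end Model

section Spectral

variable {μ : ℕ → ℝ} {m R : ℝ} {lam : ℂ}

lemma chiSeq_resolventSeq_smul_sub_Tseq (hlam : lam ≠ 0)
    (hw : HasSum (chiSum μ (resolventSeq lam (vSeq m))) 1) {a : ℕ → ℂ}
    (ha : Summable (chiSum μ a)) :
    chiSeq μ (resolventSeq lam (lam • a - Tseq μ m a)) = 0 := by
  have hT : lam • a - Tseq μ m a = (lam • a - shiftSeq a) - chiSeq μ a • vSeq m := by
    funext k; simp only [Tseq, Pi.sub_apply, Pi.smul_apply, smul_eq_mul]; ring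
  have hres : resolventSeq lam (lam • a - shiftSeq a) = a :=
    resolventSeq_eq_of_mul_sub_shiftSeq hlam fun _ => rfl
  rw [hT, map_sub, map_smul, hres, chiSeq, chiSum_sub, chiSum_smul]
  simpa [chiSeq] using (ha.hasSum.sub (hw.const_smul (chiSeq μ a))).tsum_eq

lemma smul_sub_Tseq_resolventSeq (hlam : lam ≠ 0) {h : ℕ → ℂ}
    (hχ : chiSeq μ (resolventSeq lam h) = 0) :
    lam • resolventSeq lam h - Tseq μ m (resolventSeq lam h) = h := by
  funext k
  simp [Tseq, hχ, mul_resolventSeq_sub_shiftSeq hlam]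

theorem exists_clm_hasSum_chiSum_resolventSeq (hμ : ∀ k, 0 ≤ μ k) (hR : 0 < R)
    (hμR : Summable fun k => μ (k + 1) * R⁻¹ ^ (k + 1)) (hRlam : R < ‖lam‖) :
    ∃ φ : H2 →L[ℂ] ℂ, ∀ b : H2, HasSum (chiSum μ (resolventSeq lam (fromModel R b))) (φ b) := by
  have hbound (b : H2) (k : ℕ) :
      ‖resolventSeq lam (fromModel R b) k‖ ≤ ‖b‖ * (‖lam‖ - R)⁻¹ * R⁻¹ ^ k :=
    norm_resolventSeq_le hR hRlam (norm_fromModel_le hR b) k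
  have hsum (b : H2) : Summable (chiSum μ (resolventSeq lam (fromModel R b))) :=
    summable_chiSum_of_norm_le hμ hR hμR (hbound b)
  let φ : H2 →ₗ[ℂ] ℂ :=
    { toFun b := chiSeq μ (resolventSeq lam (fromModel R b))
      map_add' b c := by
        rw [lp.coeFn_add, fromModel_add, map_add, chiSeq_add (hsum b) (hsum c)]
      map_smul' c b := by
        rw [lp.coeFn_smul, fromModel_smul, map_smul, chiSeq_smul]; rfl }
  refine ⟨φ.mkContinuous ((‖lam‖ - R)⁻¹ * (1 + R) * ∑' k, μ (k + 1) * R⁻¹ ^ (k + 1))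
    fun b => ?_, fun b => (hsum b).hasSum⟩
  calc ‖φ b‖ ≤ ‖b‖ * (‖lam‖ - R)⁻¹ * (1 + R) * ∑' k, μ (k + 1) * R⁻¹ ^ (k + 1) :=
        norm_chiSeq_le hμ hR hμR (hbound b)
    _ = _ := by ring

theorem Intertwines.range_smul_sub_eq {T' : H2 →L[ℂ] H2} (hT : Intertwines μ m R T')
    (hμ : ∀ k, 0 ≤ μ k) (hR : 0 < R) (hμR : Summable fun k => μ (k + 1) * R⁻¹ ^ (k + 1))
    (hRlam : R < ‖lam‖) (hw : HasSum (chiSum μ (resolventSeq lam (vSeq m))) 1) :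
    Set.range (fun x : H2 => lam • x - T' x)
      = {b : H2 | chiSeq μ (resolventSeq lam (fromModel R b)) = 0} := by
  have hlam : lam ≠ 0 := norm_pos_iff.mp (hR.trans hRlam)
  have hfrom (x : H2) : fromModel R ⇑(lam • x - T' x)
      = lam • fromModel R x - Tseq μ m (fromModel R x) := by
    rw [lp.coeFn_sub, lp.coeFn_smul, fromModel_sub, fromModel_smul, hT.fromModel_apply hR.ne']
  ext b
  constructor
  · rintro ⟨x, rfl⟩
    rw [Set.mem_ofPred_eq, hfrom]
    exact chiSeq_resolventSeq_smul_sub_Tseq hlam hw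
      (summable_chiSum_of_norm_le hμ hR hμR (norm_fromModel_le hR x))
  · intro hb
    have hmem : Memℓp (toModel R (resolventSeq lam (fromModel R b))) 2 := by
      refine memEllR_iff_memℓp_toModel.mp (memEllR_resolventSeq hR.le hRlam ?_)
      rw [memEllR_iff_memℓp_toModel, toModel_fromModel hR.ne']
      exact b.2
    refine ⟨⟨_, hmem⟩, lp.ext (fromModel_injective hR.ne' ?_)⟩
    rw [hfrom]
    change lam • fromModel R (toModel R _) - Tseq μ m (fromModel R (toModel R _)) = _
    rw [fromModel_toModel hR.ne']
    exact smul_sub_Tseq_resolventSeq hlam hb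

end Spectral

theorem statement16_general
    (μ : ℕ → ℝ) (m R : ℝ)
    (hm : 1 < m) (hμnn : ∀ k, 0 ≤ μ k)
    (hμm : HasSum (fun k : ℕ => μ (k + 1) * (m⁻¹) ^ (k + 1)) 1)
    (hR1 : 1 ≤ R)
    (hμR : Summable fun k : ℕ => μ (k + 1) * (R⁻¹) ^ (k + 1))
    (lam : ℂ) (hlam : R < ‖lam‖) (hlamm : lam ≠ (m : ℂ)) (hroot : genFun μ lam⁻¹ = 1)
    (tilde : (ℕ → ℂ) → ℕ → ℂ)
    (htilde : ∀ (h : ℕ → ℂ) (k : ℕ),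
      tilde h k = ∑ j ∈ Finset.range (k + 1), lam⁻¹ ^ (k + 1 - j) * h j) :
    (∀ h : ℕ → ℂ, memEllR R h → memEllR R (tilde h)) ∧
    (∃ φ : H2 →L[ℂ] ℂ, ∀ b : H2,
      HasSum (chiSum μ (tilde (fromModel R (b : ℕ → ℂ)))) (φ b)) ∧
    (∀ T' : H2 →L[ℂ] H2, Intertwines μ m R T' →
      Set.range (fun x : H2 => lam • x - T' x)
        = {b : H2 | chiSeq μ (tilde (fromModel R (b : ℕ → ℂ))) = 0}) := by
  obtain rfl : tilde = resolventSeq lam := funext fun h => funext (htilde h)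
  have hR : 0 < R := one_pos.trans_le hR1
  have hlam0 : lam ≠ 0 := norm_pos_iff.mp (hR.trans hlam)
  have hm0 : (m : ℂ) ≠ 0 := Complex.ofReal_ne_zero.mpr (by linarith)
  have hμm' : HasSum (fun k => (μ (k + 1) : ℂ) * (m : ℂ)⁻¹ ^ (k + 1)) 1 := by
    simpa using Complex.hasSum_ofReal.mpr hμm
  have hμlam : HasSum (fun k => (μ (k + 1) : ℂ) * lam⁻¹ ^ (k + 1)) 1 := by
    have hlam_inv : ‖lam⁻¹‖ ≤ R⁻¹ := by rw [norm_inv]; exact inv_anti₀ hR hlam.le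
    exact hroot ▸ (summable_mu_mul_pow hμnn hμR hlam_inv).hasSum
  have hw : HasSum (chiSum μ (resolventSeq lam (vSeq m))) 1 := by
    rw [resolventSeq_vSeq hm0 hlam0 hlamm]
    exact hasSum_chiSum_div_sub hm0 hlam0 hlamm.symm hμm' hμlam
  exact ⟨fun h => memEllR_resolventSeq hR.le hlam,
    exists_clm_hasSum_chiSum_resolventSeq hμnn hR hμR hlam,
    fun _ hT => hT.range_smul_sub_eq hμnn hR hμR hlam hw⟩

/-- For `|λ| > R`, `λ ≠ m`, `μ̂(1/λ) = 1`: the map `h ↦ h̃(λ)` with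
`h̃(λ)_k = Σ_{j≤k} λ^{j-k-1} h_j` maps `ℓ²_R` to itself, `h ↦ χ(h̃(λ))` is a bounded linear
functional on `ℓ²_R`, and the range of `λ·Id − T` equals `{h : χ(h̃(λ)) = 0}`. -/
theorem statement16
    (μ : ℕ → ℝ) (m R : ℝ)
    (hm : 1 < m) (hμnn : ∀ k, 0 ≤ μ k)
    (hμm : HasSum (fun k : ℕ => μ (k + 1) * (m⁻¹) ^ (k + 1)) 1)
    (hR1 : 1 ≤ R) (hRm : R < m)
    (hμR : Summable fun k : ℕ => μ (k + 1) * (R⁻¹) ^ (k + 1))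
    (lam : ℂ) (hlam : R < ‖lam‖) (hlamm : lam ≠ (m : ℂ)) (hroot : genFun μ lam⁻¹ = 1)
    (tilde : (ℕ → ℂ) → ℕ → ℂ)
    (htilde : ∀ (h : ℕ → ℂ) (k : ℕ),
      tilde h k = ∑ j ∈ Finset.range (k + 1), lam⁻¹ ^ (k + 1 - j) * h j) :
    (∀ h : ℕ → ℂ, memEllR R h → memEllR R (tilde h)) ∧
    (∃ φ : H2 →L[ℂ] ℂ, ∀ b : H2,
      HasSum (chiSum μ (tilde (fromModel R (b : ℕ → ℂ)))) (φ b)) ∧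
    (∀ T' : H2 →L[ℂ] H2, Intertwines μ m R T' →
      Set.range (fun x : H2 => lam • x - T' x)
        = {b : H2 | chiSeq μ (tilde (fromModel R (b : ℕ → ℂ))) = 0}) :=
  statement16_general μ m R hm hμnn hμm hR1 hμR lam hlam hlamm hroot tilde htilde
end
end
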